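/- There exists a universal constant $C>0$ with the following property. Let $\epsilon_0,\epsilon_1,\epsilon_2\in\{-1,+1\}$, let $k_0,k_1,k_2,j_0,j_1,j_2\in\mathbb{Z}$, and let $(\tau_i,\xi_i)\in\mathbb{R}\times(\mathbb{R}^4\setminus\{0\})$ for $i=0,1,2$ satisfy: $\tau_0+\tau_1+\tau_2=0$ and $\xi_0+\xi_1+\xi_2=0$; $2^{k_i}\le|\xi_i|\le 2^{k_i+2}$ for each $i$; $|\tau_i-\epsilon_i|\xi_i||\le 2^{j_i+2}$ for each $i$; the two largest of $k_0,k_1,k_2$ differ by at most $5$; and $j_{\max}\le k_{\min}$, where $j_{\max}=\max(j_0,j_1,j_2)$ and $k_{\min}=\min(k_0,k_1,k_2)$. Then for every pair of distinct indices $i,i'\in\{0,1,2\}$ one has $\big|\epsilon_i\,\hat{\xi_i}-\epsilon_{i'}\,\hat{\xi_{i'}}\big| \le C\,2^{\,k_{\min}-\min(k_i,k_{i'})}\,2^{(j_{\max}-k_{\min})/2}$. -/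

import Mathlib

/-!
For `a + b + c = 0` and signs `εa, εb`, expanding `‖a + b‖²` gives the exact identity
`(εa‖a‖ + εb‖b‖)² - ‖a + b‖² = εa εb ‖a‖ ‖b‖ ‖εa â - εb b̂‖²`.
Since `‖a + b‖ = ‖c‖`, the left side factors as `S (S - 2 εc ‖c‖)` with
`S = εa‖a‖ + εb‖b‖ + εc‖c‖`, and because the `τ`'s sum to zero, `|S| ≲ 2^jmax`.
Hence `‖εa â - εb b̂‖² ≲ 2^(kc + jmax - ka - kb)`, and the condition that the two largest
`k`'s are comparable turns this into the square of the claimed bound.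
-/

open scoped RealInnerProductSpace

theorem le_mul_zpow_mul_rpow_of_sq_le {D C : ℝ} {p q : ℤ} (hD : 0 ≤ D) (hC : 0 ≤ C)
    (h : D ^ 2 ≤ C ^ 2 * 2 ^ (2 * p + q)) : D ≤ C * 2 ^ p * 2 ^ ((q : ℝ) / 2) := by
  rw [← pow_le_pow_iff_left₀ hD (by positivity) two_ne_zero]
  refine h.trans_eq ?_
  have hq : ((2 : ℝ) ^ ((q : ℝ) / 2)) ^ 2 = 2 ^ q := by
    rw [← Real.rpow_mul_natCast zero_le_two, Nat.cast_ofNat, div_mul_cancel₀ _ two_ne_zero,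
      Real.rpow_intCast]
  rw [mul_pow, mul_pow, hq, sq ((2 : ℝ) ^ p), ← zpow_add₀ two_ne_zero, ← two_mul, mul_assoc,
    ← zpow_add₀ two_ne_zero]

theorem abs_sq_sub_sq_le {e : ℝ} (he : |e| = 1) (x y : ℝ) :
    |x ^ 2 - y ^ 2| ≤ |x + e * y| * (|x + e * y| + 2 * |y|) := by
  have hfac : x ^ 2 - y ^ 2 = (x + e * y) * (x + e * y - 2 * e * y) := by
    have he2 : e ^ 2 = 1 := by rw [← sq_abs, he, one_pow]
    linear_combination y ^ 2 * he2
  rw [hfac, abs_mul]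
  gcongr
  calc |x + e * y - 2 * e * y| ≤ |x + e * y| + |2 * e * y| := abs_sub _ _
    _ = |x + e * y| + 2 * |y| := by rw [abs_mul, abs_mul, he]; norm_num

theorem abs_sum_le_sum_abs_sub_of_sum_eq_zero {ι G : Type*} [AddCommGroup G] [LinearOrder G]
    [IsOrderedAddMonoid G] (s : Finset ι) {τ x : ι → G} (hτ : ∑ i ∈ s, τ i = 0) :
    |∑ i ∈ s, x i| ≤ ∑ i ∈ s, |τ i - x i| :=
  calc |∑ i ∈ s, x i| = |∑ i ∈ s, (τ i - x i)| := by
        rw [Finset.sum_sub_distrib, hτ, zero_sub, abs_neg]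
    _ ≤ ∑ i ∈ s, |τ i - x i| := Finset.abs_sum_le_sum_abs _ _

theorem Fin.add_add_eq_sum_univ_three {M : Type*} [AddCommMonoid M] (f : Fin 3 → M)
    {p q r : Fin 3} (hpq : p ≠ q) (hpr : p ≠ r) (hqr : q ≠ r) :
    f p + f q + f r = ∑ i, f i := by
  rw [Fin.sum_univ_three]
  fin_cases p <;> fin_cases q <;> fin_cases r <;> simp at hpq hpr hqr ⊢ <;> abel

theorem sub_max_le_min_sub_min_of_two_largest {k : Fin 3 → ℤ} {d : ℤ}
    (htop : ∃ i i', i ≠ i' ∧ max (k 0) (max (k 1) (k 2)) - k i ≤ d ∧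
      max (k 0) (max (k 1) (k 2)) - k i' ≤ d)
    {p q r : Fin 3} (hpq : p ≠ q) (hpr : p ≠ r) (hqr : q ≠ r) :
    k r - max (k p) (k q) ≤ min (k 0) (min (k 1) (k 2)) - min (k p) (k q) + d := by
  -- `k 0 + k 1 + k 2 - min - max` is the middle value, which lies within `d` of the maximum
  have hmid : 2 * max (k 0) (max (k 1) (k 2)) ≤
      k 0 + k 1 + k 2 - min (k 0) (min (k 1) (k 2)) + d := by
    obtain ⟨i, i', hii', hi, hi'⟩ := htop
    fin_cases i <;> fin_cases i' <;> simp at hii' hi hi' <;> omega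
  fin_cases p <;> fin_cases q <;> fin_cases r <;> simp at hpq hpr hqr ⊢ <;> omega

section SignedDirection

variable {E : Type*} [NormedAddCommGroup E] [InnerProductSpace ℝ E]

/-- `signedDir ε a` is the paper's `ε â`; for `a = 0` it is `0`. -/
noncomputable def signedDir (ε : ℝ) (a : E) : E := ε • (‖a‖⁻¹ • a)

theorem signed_norm_add_sq_sub_norm_add_sq {ε ε' : ℝ} (hε : |ε| = 1) (hε' : |ε'| = 1)
    (a b : E) :
    (ε * ‖a‖ + ε' * ‖b‖) ^ 2 - ‖a + b‖ ^ 2 =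
      ε * ε' * (‖a‖ * ‖b‖ * ‖signedDir ε a - signedDir ε' b‖ ^ 2) := by
  have hε2 : ε ^ 2 = 1 := by rw [← sq_abs, hε, one_pow]
  have hε2' : ε' ^ 2 = 1 := by rw [← sq_abs, hε', one_pow]
  rcases eq_or_ne a 0 with rfl | ha
  · simp [mul_pow, hε2']
  rcases eq_or_ne b 0 with rfl | hb
  · simp [mul_pow, hε2]
  rw [signedDir, signedDir, norm_add_sq_real, norm_sub_sq_real, norm_smul, norm_smul, norm_smul,
    norm_smul, real_inner_smul_left, real_inner_smul_left, real_inner_smul_right,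
    real_inner_smul_right]
  simp only [Real.norm_eq_abs, norm_inv, abs_norm, hε, hε']
  field_simp
  linear_combination (‖a‖ ^ 2 + 2 * ε' ^ 2 * ⟪a, b⟫) * hε2 + (‖b‖ ^ 2 + 2 * ⟪a, b⟫) * hε2'

theorem norm_mul_norm_mul_norm_signedDir_sub_sq_le {εa εb εc : ℝ} (hεa : |εa| = 1)
    (hεb : |εb| = 1) (hεc : |εc| = 1) {a b c : E} (hsum : a + b + c = 0) :
    ‖a‖ * ‖b‖ * ‖signedDir εa a - signedDir εb b‖ ^ 2 ≤
      |εa * ‖a‖ + εb * ‖b‖ + εc * ‖c‖| *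
        (|εa * ‖a‖ + εb * ‖b‖ + εc * ‖c‖| + 2 * ‖c‖) := by
  have hc : ‖a + b‖ = ‖c‖ := by rw [eq_neg_of_add_eq_zero_left hsum, norm_neg]
  calc ‖a‖ * ‖b‖ * ‖signedDir εa a - signedDir εb b‖ ^ 2
      = |(εa * ‖a‖ + εb * ‖b‖) ^ 2 - ‖a + b‖ ^ 2| := by
        rw [signed_norm_add_sq_sub_norm_add_sq hεa hεb, abs_mul, abs_mul, hεa, hεb,
          one_mul, one_mul, abs_of_nonneg (by positivity)]
    _ ≤ _ := by
        simpa only [hc, abs_norm] using abs_sq_sub_sq_le hεc (εa * ‖a‖ + εb * ‖b‖) ‖c‖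

section Dyadic

variable {εa εb εc : ℝ} (hεa : |εa| = 1) (hεb : |εb| = 1) (hεc : |εc| = 1)
  {a b c : E} (hsum : a + b + c = 0) {ka kb kc M : ℤ}
  (hka : (2 : ℝ) ^ ka ≤ ‖a‖) (hkb : (2 : ℝ) ^ kb ≤ ‖b‖) (hkc : ‖c‖ ≤ (2 : ℝ) ^ (kc + 2))
  (hS : |εa * ‖a‖ + εb * ‖b‖ + εc * ‖c‖| ≤ 12 * (2 : ℝ) ^ M) (hMc : M ≤ kc)
include hεa hεb hεc hsum hka hkb hkc hS hMc

theorem norm_signedDir_sub_sq_le_of_dyadic :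
    ‖signedDir εa a - signedDir εb b‖ ^ 2 ≤ 240 * (2 : ℝ) ^ (kc + M - ka - kb) := by
  have h2 : (2 : ℝ) ≠ 0 := two_ne_zero
  have hMc' : (2 : ℝ) ^ M ≤ 2 ^ kc := zpow_le_zpow_right₀ one_le_two hMc
  have hkc' : ‖c‖ ≤ 4 * 2 ^ kc := by
    rwa [zpow_add₀ h2, mul_comm, show (2 : ℝ) ^ (2 : ℤ) = 4 by norm_num] at hkc
  have hab : (2 : ℝ) ^ ka * 2 ^ kb ≤ ‖a‖ * ‖b‖ := mul_le_mul hka hkb (by positivity) (by positivity)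
  rw [← mul_le_mul_iff_of_pos_left (by positivity : (0 : ℝ) < 2 ^ ka * 2 ^ kb)]
  calc 2 ^ ka * 2 ^ kb * ‖signedDir εa a - signedDir εb b‖ ^ 2
      ≤ ‖a‖ * ‖b‖ * ‖signedDir εa a - signedDir εb b‖ ^ 2 := by gcongr
    _ ≤ _ := norm_mul_norm_mul_norm_signedDir_sub_sq_le hεa hεb hεc hsum
    _ ≤ 12 * 2 ^ M * (12 * 2 ^ M + 2 * (4 * 2 ^ kc)) := by gcongr
    _ ≤ 12 * 2 ^ M * (20 * 2 ^ kc) := by gcongr; linarith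
    _ = 2 ^ ka * 2 ^ kb * (240 * 2 ^ (kc + M - ka - kb)) := by
        rw [show kc + M - ka - kb = kc + M + (-ka) + (-kb) by ring, zpow_add₀ h2, zpow_add₀ h2,
          zpow_add₀ h2, zpow_neg, zpow_neg]
        field_simp
        ring

theorem norm_signedDir_sub_le_of_dyadic {m : ℤ} (hk : kc - max ka kb ≤ m - min ka kb + 5) :
    ‖signedDir εa a - signedDir εb b‖ ≤
      100 * (2 : ℝ) ^ (m - min ka kb) * (2 : ℝ) ^ (((M - m : ℤ) : ℝ) / 2) := by
  refine le_mul_zpow_mul_rpow_of_sq_le (norm_nonneg _) (by norm_num) ?_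
  have hexp : kc + M - ka - kb ≤ 2 * (m - min ka kb) + (M - m) + 5 := by omega
  calc ‖signedDir εa a - signedDir εb b‖ ^ 2
      ≤ 240 * (2 : ℝ) ^ (kc + M - ka - kb) :=
        norm_signedDir_sub_sq_le_of_dyadic hεa hεb hεc hsum hka hkb hkc hS hMc
    _ ≤ 240 * (2 : ℝ) ^ (2 * (m - min ka kb) + (M - m) + 5) := by
        gcongr
        norm_num
    _ ≤ 100 ^ 2 * (2 : ℝ) ^ (2 * (m - min ka kb) + (M - m)) := by
        rw [zpow_add₀ two_ne_zero]
        norm_num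
        nlinarith [zpow_pos (two_pos (α := ℝ)) (2 * (m - min ka kb) + (M - m))]

end Dyadic

end SignedDirection

/-- **Geometry of the cone** (pointwise form).  There is a universal constant `C > 0` such
that for any signs `ε i ∈ {±1}`, integers `k i`, `j i`, and space-time frequencies
`(τ i, ξ i)` with `ξ i ≠ 0` summing to zero, localized as `2^(k i) ≤ ‖ξ i‖ ≤ 2^(k i + 2)` and
`|τ i - ε i ‖ξ i‖| ≤ 2^(j i + 2)`, with the two largest of the `k i` within `5` of each other
and `max j ≤ min k`, the angular distances `|ε i ξ̂ i - ε i' ξ̂ i'|` obey the stated bound. -/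
theorem geometry_of_the_cone :
    ∃ C : ℝ, 0 < C ∧
      ∀ (ε : Fin 3 → ℝ) (k j : Fin 3 → ℤ) (τ : Fin 3 → ℝ)
        (ξ : Fin 3 → EuclideanSpace ℝ (Fin 4)),
        (∀ i, ε i = 1 ∨ ε i = -1) →
        (∀ i, ξ i ≠ 0) →
        τ 0 + τ 1 + τ 2 = 0 →
        ξ 0 + ξ 1 + ξ 2 = 0 →
        (∀ i, (2:ℝ) ^ (k i) ≤ ‖ξ i‖ ∧ ‖ξ i‖ ≤ (2:ℝ) ^ (k i + 2)) →
        (∀ i, |τ i - ε i * ‖ξ i‖| ≤ (2:ℝ) ^ (j i + 2)) →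
        (∃ i i' : Fin 3, i ≠ i' ∧
          max (k 0) (max (k 1) (k 2)) - k i ≤ 5 ∧
          max (k 0) (max (k 1) (k 2)) - k i' ≤ 5) →
        max (j 0) (max (j 1) (j 2)) ≤ min (k 0) (min (k 1) (k 2)) →
        ∀ i i' : Fin 3, i ≠ i' →
          ‖ε i • (‖ξ i‖⁻¹ • ξ i) - ε i' • (‖ξ i'‖⁻¹ • ξ i')‖ ≤
            C * (2:ℝ) ^ (min (k 0) (min (k 1) (k 2)) - min (k i) (k i'))
              * (2:ℝ) ^ ((((max (j 0) (max (j 1) (j 2))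
                  - min (k 0) (min (k 1) (k 2))) : ℤ) : ℝ) / 2) := by
  refine ⟨100, by norm_num, ?_⟩
  intro ε k j τ ξ hε _ hτ hξ hk hj htop hjk i i' hii'
  have hε1 (s : Fin 3) : |ε s| = 1 := by rcases hε s with h | h <;> simp [h]
  have hjM (s : Fin 3) : j s ≤ max (j 0) (max (j 1) (j 2)) := by fin_cases s <;> simp
  have hmk (s : Fin 3) : min (k 0) (min (k 1) (k 2)) ≤ k s := by fin_cases s <;> simp
  have hj4 (s : Fin 3) : (2 : ℝ) ^ (j s + 2) ≤ 4 * 2 ^ max (j 0) (max (j 1) (j 2)) := by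
    rw [mul_comm, show (4 : ℝ) = 2 ^ (2 : ℤ) by norm_num, ← zpow_add₀ two_ne_zero]
    exact zpow_le_zpow_right₀ one_le_two (by linarith [hjM s])
  have hS : |∑ s, ε s * ‖ξ s‖| ≤ 12 * (2 : ℝ) ^ max (j 0) (max (j 1) (j 2)) :=
    calc |∑ s, ε s * ‖ξ s‖| ≤ ∑ s, |τ s - ε s * ‖ξ s‖| :=
          abs_sum_le_sum_abs_sub_of_sum_eq_zero _ (by rwa [Fin.sum_univ_three])
      _ ≤ ∑ _s : Fin 3, 4 * (2 : ℝ) ^ max (j 0) (max (j 1) (j 2)) :=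
          Finset.sum_le_sum fun s _ => (hj s).trans (hj4 s)
      _ = _ := by simp only [Finset.sum_const, Finset.card_univ, Fintype.card_fin]; ring
  obtain ⟨r, hir, hi'r⟩ : ∃ r, i ≠ r ∧ i' ≠ r := by
    fin_cases i <;> fin_cases i' <;> decide
  refine norm_signedDir_sub_le_of_dyadic (hε1 i) (hε1 i') (hε1 r) ?_ (hk i).1 (hk i').1
    (hk r).2 ?_ (hjk.trans (hmk r)) (sub_max_le_min_sub_min_of_two_largest htop hii' hir hi'r)
  · rw [Fin.add_add_eq_sum_univ_three ξ hii' hir hi'r, Fin.sum_univ_three, hξ]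
  · rwa [Fin.add_add_eq_sum_univ_three (fun s => ε s * ‖ξ s‖) hii' hir hi'r]
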